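/- If a generalized hexagon with parameters q, q is embedded in a symplectic space of type Sp(6,q) (with all points of the space as hexagon points and certain totally isotropic lines as hexagon lines, and W₂(x) = x^⊥), then q is even. Equivalently: the generalized quadrangle of type Sp(4,q) contains a 3×3 grid of six lines (three concurrent pairwise-meeting triples forming a grid) if and only if q is even. -/

import Mathlib

open Module

variable {F : Type*} [Field F] [Fintype F]
variable {V : Type*} [AddCommGroup V] [Module F V] [FiniteDimensional F V]

set_option linter.unusedSectionVars false
set_option maxHeartbeats 1000000

section Helpers

variable (B : LinearMap.BilinForm F V)

lemma skew_of_alt (halt : ∀ v : V, B v v = 0) (u v : V) : B u v = - B v u := by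
  have h := halt (u + v)
  simp only [map_add, LinearMap.add_apply, halt u, halt v] at h
  linear_combination h

lemma exists_gen {p : Submodule F V} (hp : finrank F p = 1) :
    ∃ v : V, v ≠ 0 ∧ p = Submodule.span F {v} := by
  have hb : p ≠ ⊥ := by
    intro h
    rw [h] at hp; simp [finrank_bot] at hp
  obtain ⟨v, hv, hv0⟩ := (Submodule.ne_bot_iff p).mp hb
  refine ⟨v, hv0, ?_⟩
  have hle : Submodule.span F {v} ≤ p := by
    rw [Submodule.span_singleton_le_iff_mem]; exact hv
  exact (Submodule.eq_of_le_of_finrank_le hle (by rw [finrank_span_singleton hv0, hp])).symm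

lemma span_eq_of_mem {p : Submodule F V} (hp : finrank F p = 1) {v : V}
    (hv : v ∈ p) (hv0 : v ≠ 0) : Submodule.span F {v} = p := by
  have hle : Submodule.span F {v} ≤ p := by
    rw [Submodule.span_singleton_le_iff_mem]; exact hv
  exact Submodule.eq_of_le_of_finrank_le hle (by rw [finrank_span_singleton hv0, hp])

/-- rank bound for intersecting with the kernel of a functional -/
lemma finrank_inf_ker_ge (W : Submodule F V) (φ : V →ₗ[F] F) :
    finrank F W ≤ finrank F (W ⊓ LinearMap.ker φ : Submodule F V) + 1 := by
  classical
  have hker : (W ⊓ LinearMap.ker φ : Submodule F V)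
      = (LinearMap.ker (φ.domRestrict W)).map W.subtype := by
    ext v
    constructor
    · rintro ⟨hvW, hvk⟩
      exact ⟨⟨v, hvW⟩, by simpa using hvk, rfl⟩
    · rintro ⟨⟨w, hw⟩, hk, rfl⟩
      exact ⟨hw, by simpa using hk⟩
  have h1 : finrank F ((LinearMap.ker (φ.domRestrict W)).map W.subtype)
      = finrank F (LinearMap.ker (φ.domRestrict W)) :=
    Submodule.finrank_map_subtype_eq W _
  have h2 := LinearMap.finrank_range_add_finrank_ker (φ.domRestrict W)
  have h3 : finrank F (LinearMap.range (φ.domRestrict W)) ≤ 1 := by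
    simpa using Submodule.finrank_le (LinearMap.range (φ.domRestrict W))
  rw [hker, h1]
  omega

lemma finrank_inf_ker_eq (W : Submodule F V) (φ : V →ₗ[F] F) {w : V}
    (hw : w ∈ W) (hφw : φ w ≠ 0) :
    finrank F (W ⊓ LinearMap.ker φ : Submodule F V) + 1 = finrank F W := by
  classical
  have hker : (W ⊓ LinearMap.ker φ : Submodule F V)
      = (LinearMap.ker (φ.domRestrict W)).map W.subtype := by
    ext v
    constructor
    · rintro ⟨hvW, hvk⟩
      exact ⟨⟨v, hvW⟩, by simpa using hvk, rfl⟩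
    · rintro ⟨⟨w', hw'⟩, hk, rfl⟩
      exact ⟨hw', by simpa using hk⟩
  have h1 : finrank F ((LinearMap.ker (φ.domRestrict W)).map W.subtype)
      = finrank F (LinearMap.ker (φ.domRestrict W)) :=
    Submodule.finrank_map_subtype_eq W _
  have h2 := LinearMap.finrank_range_add_finrank_ker (φ.domRestrict W)
  have h3 : LinearMap.range (φ.domRestrict W) = ⊤ := by
    rw [eq_top_iff]
    intro c _
    refine ⟨⟨(c / φ w) • w, Submodule.smul_mem _ _ hw⟩, ?_⟩
    show φ ((c / φ w) • w) = c
    rw [map_smul, smul_eq_mul]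
    field_simp
  rw [h3, finrank_top] at h2
  rw [hker, h1]
  rw [finrank_self] at h2
  omega

end Helpers

lemma span_eq_of_mem' {p : Submodule F V} (hp : finrank F p = 1) {v : V}
    (hv : v ∈ p) (hv0 : v ≠ 0) : Submodule.span F {v} = p := by
  have hle : Submodule.span F {v} ≤ p := by
    rw [Submodule.span_singleton_le_iff_mem]; exact hv
  exact Submodule.eq_of_le_of_finrank_le hle (by rw [finrank_span_singleton hv0, hp])

lemma disj_points {x p : Submodule F V} (hx : finrank F x = 1) (hp : finrank F p = 1)
    (hne : p ≠ x) : x ⊓ p = ⊥ := by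
  by_contra h
  obtain ⟨v, hv, hv0⟩ := (Submodule.ne_bot_iff _).mp h
  have h1 : Submodule.span F {v} = x := span_eq_of_mem' hx hv.1 hv0
  have h2 : Submodule.span F {v} = p := span_eq_of_mem' hp hv.2 hv0
  exact hne (h2.symm.trans h1)

lemma card_rank2_between (x W : Submodule F V) (hW3 : finrank F W = 3)
    (hx1 : finrank F x = 1) (hxW : x ≤ W) :
    Nat.card {T : Submodule F V // finrank F T = 2 ∧ x ≤ T ∧ T ≤ W}
      = Fintype.card F + 1 := by
  classical
  obtain ⟨xv, hxv0, hxspan⟩ : ∃ v : V, v ≠ 0 ∧ x = Submodule.span F {v} := by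
    have hb : x ≠ ⊥ := by intro h; rw [h] at hx1; simp at hx1
    obtain ⟨v, hv, hv0⟩ := (Submodule.ne_bot_iff x).mp hb
    exact ⟨v, hv0, (span_eq_of_mem' hx1 hv hv0).symm⟩
  have hxvx : xv ∈ x := by rw [hxspan]; exact Submodule.mem_span_singleton_self xv
  -- complement of x inside W
  set x' : Submodule F W := x.comap W.subtype with hx'def
  obtain ⟨C', hC'⟩ := Submodule.exists_isCompl x'
  set C : Submodule F V := C'.map W.subtype with hCdef
  have hCW : C ≤ W := by
    rintro v ⟨w, _, rfl⟩; exact w.2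
  have hxC : x ⊓ C = ⊥ := by
    rw [eq_bot_iff]
    rintro v ⟨hvx, hvC⟩
    obtain ⟨w, hw, rfl⟩ := hvC
    have : w ∈ x' ⊓ C' := ⟨by simpa [hx'def] using hvx, hw⟩
    rw [hC'.inf_eq_bot] at this
    have hw0 : w = 0 := by simpa using this
    simp [hw0]
  have hsup : x ⊔ C = W := by
    apply le_antisymm (sup_le hxW hCW)
    intro w hw
    have : (⟨w, hw⟩ : W) ∈ x' ⊔ C' := by rw [hC'.sup_eq_top]; trivial
    obtain ⟨a, ha, b, hb, hab⟩ := Submodule.mem_sup.mp this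
    have : w = (a : V) + (b : V) := by
      have := congrArg (W.subtype) hab; simpa using this.symm
    rw [this]
    exact Submodule.add_mem_sup (by simpa [hx'def] using ha) ⟨b, hb, rfl⟩
  have hC2 : finrank F C = 2 := by
    have := Submodule.finrank_sup_add_finrank_inf_eq x C
    rw [hsup, hxC, hW3, hx1] at this
    simp [finrank_bot] at this
    omega
  -- basis of C
  have hfd : finrank F C = 2 := hC2
  let bC : Basis (Fin 2) F C := (Module.finBasis F C).reindex (finCongr hfd)
  set g0 : V := (bC 0 : V) with hg0
  set g1 : V := (bC 1 : V) with hg1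
  have hg0C : g0 ∈ C := (bC 0).2
  have hg1C : g1 ∈ C := (bC 1).2
  have key : ∀ α β γ : F, α • xv + β • g0 + γ • g1 = 0 → α = 0 ∧ β = 0 ∧ γ = 0 := by
    intro α β γ h
    have hmem : α • xv ∈ x ⊓ C := by
      constructor
      · exact Submodule.smul_mem _ _ hxvx
      · have : α • xv = -(β • g0 + γ • g1) := by
          rw [eq_neg_iff_add_eq_zero]; rw [← h]; abel
        rw [this]
        exact Submodule.neg_mem _ (Submodule.add_mem _ (Submodule.smul_mem _ _ hg0C)
          (Submodule.smul_mem _ _ hg1C))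
    rw [hxC] at hmem
    have hα : α = 0 := by
      rcases smul_eq_zero.mp (Submodule.mem_bot F |>.mp hmem) with h' | h'
      · exact h'
      · exact absurd h' hxv0
    have h2 : β • g0 + γ • g1 = 0 := by
      rw [hα, zero_smul, zero_add] at h; exact h
    have h3 : β • (bC 0) + γ • (bC 1) = (0 : C) := by
      apply Subtype.ext
      push_cast
      exact h2
    have h4 : ∀ i, (![β, γ] : Fin 2 → F) i = 0 := by
      have hli := bC.linearIndependent
      rw [Fintype.linearIndependent_iff] at hli
      apply hli
      rw [Fin.sum_univ_two]
      simpa using h3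
    exact ⟨hα, h4 0, h4 1⟩
  -- the parametrization
  have memW : ∀ c : F, g0 + c • g1 ∈ W := fun c =>
    W.add_mem (hCW hg0C) (W.smul_mem _ (hCW hg1C))
  have hne0 : ∀ c : F, g0 + c • g1 ≠ 0 := by
    intro c h
    have := key 0 1 c (by rw [zero_smul, zero_add, one_smul]; exact h)
    simpa using this.2.1
  have hg1ne0 : g1 ≠ 0 := by
    intro h
    have := key 0 0 1 (by rw [zero_smul, zero_add, zero_smul, zero_add, one_smul]; exact h)
    simpa using this.2.2
  have hdisj : ∀ v : V, v ∈ C → v ≠ 0 → x ⊓ Submodule.span F {v} = ⊥ := by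
    intro v hvC hv0
    apply disj_points hx1 (finrank_span_singleton hv0)
    intro h
    have hvx : v ∈ x := by rw [← h]; exact Submodule.mem_span_singleton_self v
    have : v ∈ x ⊓ C := ⟨hvx, hvC⟩
    rw [hxC] at this
    exact hv0 (by simpa using this)
  have hrank2 : ∀ v : V, v ∈ C → v ≠ 0 → finrank F (x ⊔ Submodule.span F {v} : Submodule F V) = 2 := by
    intro v hvC hv0
    have := Submodule.finrank_sup_add_finrank_inf_eq x (Submodule.span F {v})
    rw [hdisj v hvC hv0, hx1, finrank_span_singleton hv0] at this
    simp [finrank_bot] at this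
    omega
  let ψ : Option F → {T : Submodule F V // finrank F T = 2 ∧ x ≤ T ∧ T ≤ W} := fun o =>
    match o with
    | some c => ⟨x ⊔ Submodule.span F {g0 + c • g1},
        hrank2 _ (C.add_mem hg0C (C.smul_mem _ hg1C)) (hne0 c), le_sup_left,
        sup_le hxW (by rw [Submodule.span_singleton_le_iff_mem]; exact memW c)⟩
    | none => ⟨x ⊔ Submodule.span F {g1},
        hrank2 _ hg1C hg1ne0, le_sup_left,
        sup_le hxW (by rw [Submodule.span_singleton_le_iff_mem]; exact hCW hg1C)⟩
  have hψinj : Function.Injective ψ := by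
    intro o o' h
    have hval := congrArg Subtype.val h
    match o, o' with
    | some c, some c' =>
      simp only [ψ] at hval
      have hmem : g0 + c • g1 ∈ x ⊔ Submodule.span F {g0 + c' • g1} := by
        rw [← hval]
        exact Submodule.mem_sup_right (Submodule.mem_span_singleton_self _)
      obtain ⟨a, ha, b, hb, hab⟩ := Submodule.mem_sup.mp hmem
      obtain ⟨α, rfl⟩ := Submodule.mem_span_singleton.mp (by rw [hxspan] at ha; exact ha)
      obtain ⟨β, rfl⟩ := Submodule.mem_span_singleton.mp hb
      have h0 : α • xv + β • (g0 + c' • g1) - (g0 + c • g1) = 0 := by rw [hab]; abel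
      have heq : α • xv + (β - 1) • g0 + (β * c' - c) • g1 = 0 := by
        linear_combination (norm := module) h0
      obtain ⟨h1, h2, h3⟩ := key _ _ _ heq
      have hβ : β = 1 := by linear_combination h2
      congr 1
      have : c = β * c' := by linear_combination -h3
      rw [this, hβ, one_mul]
    | some c, none =>
      exfalso
      simp only [ψ] at hval
      have hmem : g0 + c • g1 ∈ x ⊔ Submodule.span F {g1} := by
        rw [← hval]
        exact Submodule.mem_sup_right (Submodule.mem_span_singleton_self _)
      obtain ⟨a, ha, b, hb, hab⟩ := Submodule.mem_sup.mp hmem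
      obtain ⟨α, rfl⟩ := Submodule.mem_span_singleton.mp (by rw [hxspan] at ha; exact ha)
      obtain ⟨β, rfl⟩ := Submodule.mem_span_singleton.mp hb
      have h0 : (g0 + c • g1) - (α • xv + β • g1) = 0 := by rw [hab]; abel
      have heq : (-α) • xv + (1 : F) • g0 + (c - β) • g1 = 0 := by
        linear_combination (norm := module) h0
      obtain ⟨h1, h2, h3⟩ := key _ _ _ heq
      exact one_ne_zero h2
    | none, some c' =>
      exfalso
      simp only [ψ] at hval
      have hmem : g1 ∈ x ⊔ Submodule.span F {g0 + c' • g1} := by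
        rw [← hval]
        exact Submodule.mem_sup_right (Submodule.mem_span_singleton_self _)
      obtain ⟨a, ha, b, hb, hab⟩ := Submodule.mem_sup.mp hmem
      obtain ⟨α, rfl⟩ := Submodule.mem_span_singleton.mp (by rw [hxspan] at ha; exact ha)
      obtain ⟨β, rfl⟩ := Submodule.mem_span_singleton.mp hb
      have h0 : α • xv + β • (g0 + c' • g1) - g1 = 0 := by rw [hab]; abel
      have heq : α • xv + β • g0 + (β * c' - 1) • g1 = 0 := by
        linear_combination (norm := module) h0
      obtain ⟨h1, h2, h3⟩ := key _ _ _ heq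
      rw [h2, zero_mul, zero_sub] at h3
      exact one_ne_zero (neg_eq_zero.mp h3)
    | none, none => rfl
  have hψsurj : Function.Surjective ψ := by
    rintro ⟨T, hT2, hxT, hTW⟩
    have hTx : ¬ T ≤ x := by
      intro h
      have heq := Submodule.eq_of_le_of_finrank_le h (by omega)
      rw [heq, hx1] at hT2
      omega
    obtain ⟨t, htT, htx⟩ := SetLike.not_le_iff_exists.mp hTx
    have htW : t ∈ W := hTW htT
    rw [← hsup] at htW
    obtain ⟨a, ha, b, hb, hab⟩ := Submodule.mem_sup.mp htW
    obtain ⟨α, rfl⟩ := Submodule.mem_span_singleton.mp (by rw [hxspan] at ha; exact ha)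
    -- b ∈ C : write in basis
    obtain ⟨β, γ, hbg⟩ : ∃ β γ : F, b = β • g0 + γ • g1 := by
      have : (⟨b, hb⟩ : C) = (bC.repr ⟨b, hb⟩ 0) • bC 0 + (bC.repr ⟨b, hb⟩ 1) • bC 1 := by
        have := bC.sum_repr ⟨b, hb⟩
        rw [Fin.sum_univ_two] at this
        exact this.symm
      refine ⟨bC.repr ⟨b, hb⟩ 0, bC.repr ⟨b, hb⟩ 1, ?_⟩
      have := congrArg (C.subtype) this
      simpa using this
    have hu : β • g0 + γ • g1 ∈ T := by
      have : β • g0 + γ • g1 = t - α • xv := by rw [← hab, hbg]; abel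
      rw [this]
      exact T.sub_mem htT (hxT (Submodule.smul_mem _ _ hxvx))
    by_cases hβ : β = 0
    · -- T = ψ none
      have hγ : γ ≠ 0 := by
        intro hγ
        apply htx
        rw [hβ, hγ, zero_smul, zero_smul, add_zero] at hbg
        rw [← hab, hbg]
        simpa using ha
      have hg1T : g1 ∈ T := by
        have : g1 = γ⁻¹ • (β • g0 + γ • g1) := by
          rw [hβ]; simp [smul_smul, inv_mul_cancel₀ hγ]
        rw [this]
        exact T.smul_mem _ hu
      refine ⟨none, ?_⟩
      apply Subtype.ext
      simp only [ψ]
      exact Submodule.eq_of_le_of_finrank_le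
        (sup_le hxT (by rw [Submodule.span_singleton_le_iff_mem]; exact hg1T))
        (by rw [hrank2 _ hg1C hg1ne0]; omega)
    · -- T = ψ (some (γ/β))
      have hgT : g0 + (γ / β) • g1 ∈ T := by
        have : g0 + (γ / β) • g1 = β⁻¹ • (β • g0 + γ • g1) := by
          rw [smul_add, smul_smul, smul_smul, inv_mul_cancel₀ hβ, one_smul,
            div_eq_inv_mul]
        rw [this]
        exact T.smul_mem _ hu
      refine ⟨some (γ / β), ?_⟩
      apply Subtype.ext
      simp only [ψ]
      exact Submodule.eq_of_le_of_finrank_le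
        (sup_le hxT (by rw [Submodule.span_singleton_le_iff_mem]; exact hgT))
        (by rw [hrank2 _ (C.add_mem hg0C (C.smul_mem _ hg1C)) (hne0 _)]; omega)
  have := Nat.card_congr (Equiv.ofBijective ψ ⟨hψinj, hψsurj⟩)
  rw [← this, Nat.card_eq_fintype_card, Fintype.card_option]


/-- An isotropic/singular point of the polar space defined by `B`. -/
def IsIsoPoint (B : LinearMap.BilinForm F V) (x : Submodule F V) : Prop :=
  finrank F x = 1 ∧ ∀ v ∈ x, B v v = 0

/-- Adjacency in the point graph of the hexagon with line set `𝓛`. -/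
def HexAdj (B : LinearMap.BilinForm F V) (𝓛 : Set (Submodule F V))
    (x y : Submodule F V) : Prop :=
  IsIsoPoint B x ∧ IsIsoPoint B y ∧ x ≠ y ∧ ∃ L ∈ 𝓛, x ≤ L ∧ y ≤ L

/-- `x` and `y` are at distance at most 2 in the point graph, i.e. `y ∈ W₂(x)`. -/
def HexDle2 (B : LinearMap.BilinForm F V) (𝓛 : Set (Submodule F V))
    (x y : Submodule F V) : Prop :=
  x = y ∨ HexAdj B 𝓛 x y ∨ ∃ z, HexAdj B 𝓛 x z ∧ HexAdj B 𝓛 z y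

/-- `W(x) = W₁(x)`: the subspace spanned by the hexagon lines through `x`. -/
def HexW (𝓛 : Set (Submodule F V)) (x : Submodule F V) : Submodule F V :=
  sSup {L | L ∈ 𝓛 ∧ x ≤ L}

/-- `𝓛` is the line set of a generalized hexagon with parameters `q, q`, all of whose
points are the isotropic/singular points of the polar space of `B`, naturally embedded:
lines are totally isotropic lines, every point is on `q+1` lines, the point graph has
diameter 3, there are no short circuits (unique line through two collinear points, all
triangles lie on lines, unique midpoint for points at distance 2), distance at most 2
coincides with perpendicularity (`W₂(x) = x^⊥`), and each `W(x)` is a plane. -/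
structure IsHexagonEmbedding (B : LinearMap.BilinForm F V) (𝓛 : Set (Submodule F V)) :
    Prop where
  lines_rank : ∀ L ∈ 𝓛, finrank F L = 2
  lines_isotropic : ∀ L ∈ 𝓛, ∀ u ∈ L, ∀ w ∈ L, B u w = 0
  point_on_line : ∀ x, IsIsoPoint B x → ∃ L ∈ 𝓛, x ≤ L
  lines_per_point : ∀ x, IsIsoPoint B x →
    Nat.card {L : Submodule F V // L ∈ 𝓛 ∧ x ≤ L} = Fintype.card F + 1
  unique_line : ∀ x y L L', L ∈ 𝓛 → L' ∈ 𝓛 → IsIsoPoint B x → IsIsoPoint B y → x ≠ y →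
    x ≤ L → y ≤ L → x ≤ L' → y ≤ L' → L = L'
  no_triangle : ∀ x y z, HexAdj B 𝓛 x y → HexAdj B 𝓛 y z → HexAdj B 𝓛 x z →
    ∃ L ∈ 𝓛, x ≤ L ∧ y ≤ L ∧ z ≤ L
  unique_mid : ∀ x y, IsIsoPoint B x → IsIsoPoint B y → x ≠ y → ¬ HexAdj B 𝓛 x y →
    HexDle2 B 𝓛 x y → ∃! z, HexAdj B 𝓛 x z ∧ HexAdj B 𝓛 z y
  diam3 : ∀ x y, IsIsoPoint B x → IsIsoPoint B y → ¬ HexDle2 B 𝓛 x y →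
    ∃ z, HexAdj B 𝓛 x z ∧ HexDle2 B 𝓛 z y
  opp_exists : ∃ x y, IsIsoPoint B x ∧ IsIsoPoint B y ∧ ¬ HexDle2 B 𝓛 x y
  perp_iff : ∀ x y, IsIsoPoint B x → IsIsoPoint B y →
    (HexDle2 B 𝓛 x y ↔ ∀ u ∈ x, ∀ v ∈ y, B u v = 0)
  w_plane : ∀ x, IsIsoPoint B x → finrank F (HexW 𝓛 x) = 3

/-! Hexagon helper lemmas -/

section HexLemmas

variable {B : LinearMap.BilinForm F V} {𝓛 : Set (Submodule F V)}

lemma mkIso (halt : ∀ v : V, B v v = 0) {v : V} (hv : v ≠ 0) :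
    IsIsoPoint B (Submodule.span F {v}) :=
  ⟨finrank_span_singleton hv, fun w _ => halt w⟩

lemma adj_symm {x y : Submodule F V} (h : HexAdj B 𝓛 x y) : HexAdj B 𝓛 y x :=
  ⟨h.2.1, h.1, h.2.2.1.symm, by obtain ⟨L, h1, h2, h3⟩ := h.2.2.2; exact ⟨L, h1, h3, h2⟩⟩

lemma dle2_of_adj {x y : Submodule F V} (h : HexAdj B 𝓛 x y) : HexDle2 B 𝓛 x y :=
  Or.inr (Or.inl h)

lemma dle2_of_path {x z y : Submodule F V} (h1 : HexAdj B 𝓛 x z) (h2 : HexAdj B 𝓛 z y) :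
    HexDle2 B 𝓛 x y := Or.inr (Or.inr ⟨z, h1, h2⟩)

lemma perp_of_adj (hhex : IsHexagonEmbedding B 𝓛) {x y : Submodule F V}
    (h : HexAdj B 𝓛 x y) : ∀ u ∈ x, ∀ w ∈ y, B u w = 0 := by
  obtain ⟨_, _, _, L, hL, hxL, hyL⟩ := h
  intro u hu w hw
  exact hhex.lines_isotropic L hL u (hxL hu) w (hyL hw)

lemma perp_of_dle2 (hhex : IsHexagonEmbedding B 𝓛) {x y : Submodule F V}
    (hx : IsIsoPoint B x) (hy : IsIsoPoint B y) (h : HexDle2 B 𝓛 x y) :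
    ∀ u ∈ x, ∀ w ∈ y, B u w = 0 := (hhex.perp_iff x y hx hy).mp h

lemma not_dle2_of_nonperp (hhex : IsHexagonEmbedding B 𝓛) {x y : Submodule F V}
    (hx : IsIsoPoint B x) (hy : IsIsoPoint B y) {u w : V} (hu : u ∈ x) (hw : w ∈ y)
    (hB : B u w ≠ 0) : ¬ HexDle2 B 𝓛 x y :=
  fun h => hB (perp_of_dle2 hhex hx hy h u hu w hw)

lemma perp_pts {v w : V} (h : B v w = 0) :
    ∀ u ∈ Submodule.span F {v}, ∀ u' ∈ Submodule.span F {w}, B u u' = 0 := by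
  intro u hu u' hu'
  obtain ⟨c, rfl⟩ := Submodule.mem_span_singleton.mp hu
  obtain ⟨d, rfl⟩ := Submodule.mem_span_singleton.mp hu'
  simp [h]

lemma adj_perp_vec (hhex : IsHexagonEmbedding B 𝓛) {v w : V}
    (h : HexAdj B 𝓛 (Submodule.span F {v}) (Submodule.span F {w})) : B v w = 0 :=
  perp_of_adj hhex h v (Submodule.mem_span_singleton_self v) w
    (Submodule.mem_span_singleton_self w)

lemma line_le_hexW {L x : Submodule F V} (hL : L ∈ 𝓛) (hxL : x ≤ L) :
    L ≤ HexW 𝓛 x := le_sSup ⟨hL, hxL⟩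

lemma point_le_hexW (hhex : IsHexagonEmbedding B 𝓛) {x : Submodule F V}
    (hx : IsIsoPoint B x) : x ≤ HexW 𝓛 x := by
  obtain ⟨L, hL, hxL⟩ := hhex.point_on_line x hx
  exact le_trans hxL (line_le_hexW hL hxL)

lemma hexW_isotropic (hhex : IsHexagonEmbedding B 𝓛) (halt : ∀ v : V, B v v = 0)
    {x : Submodule F V} (hx : IsIsoPoint B x) :
    ∀ u ∈ HexW 𝓛 x, ∀ w ∈ HexW 𝓛 x, B u w = 0 := by
  classical
  have cross : ∀ L ∈ 𝓛, x ≤ L → ∀ L' ∈ 𝓛, x ≤ L' → ∀ u ∈ L, ∀ w ∈ L', B u w = 0 := by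
    intro L hL hxL L' hL' hxL' u hu w hw
    by_cases hu0 : u = 0
    · simp [hu0]
    by_cases hw0 : w = 0
    · simp [hw0]
    by_cases hux : Submodule.span F {u} = x
    · exact hhex.lines_isotropic L' hL' u (hxL' (hux ▸ Submodule.mem_span_singleton_self u))
        w hw
    by_cases hwx : Submodule.span F {w} = x
    · exact hhex.lines_isotropic L hL u hu w (hxL (hwx ▸ Submodule.mem_span_singleton_self w))
    have hadj1 : HexAdj B 𝓛 (Submodule.span F {u}) x :=
      ⟨mkIso halt hu0, hx, hux, L, hL, by
        rw [Submodule.span_singleton_le_iff_mem]; exact hu, hxL⟩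
    have hadj2 : HexAdj B 𝓛 x (Submodule.span F {w}) :=
      ⟨hx, mkIso halt hw0, fun h => hwx h.symm, L', hL', hxL', by
        rw [Submodule.span_singleton_le_iff_mem]; exact hw⟩
    exact perp_of_dle2 hhex (mkIso halt hu0) (mkIso halt hw0)
      (dle2_of_path hadj1 hadj2) u (Submodule.mem_span_singleton_self u)
      w (Submodule.mem_span_singleton_self w)
  intro u hu w hw
  -- first: for u on a line through x
  have step1 : ∀ L ∈ 𝓛, x ≤ L → ∀ u' ∈ L, B u' w = 0 := by
    intro L hL hxL u' hu'
    have : HexW 𝓛 x ≤ LinearMap.ker (B u') := by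
      apply sSup_le
      rintro L' ⟨hL', hxL'⟩
      intro w' hw'
      exact cross L hL hxL L' hL' hxL' u' hu' w' hw'
    exact this hw
  have : HexW 𝓛 x ≤ LinearMap.ker (B.flip w) := by
    apply sSup_le
    rintro L ⟨hL, hxL⟩
    intro u' hu'
    simpa using step1 L hL hxL u' hu'
  simpa using this hu

lemma covering (hhex : IsHexagonEmbedding B 𝓛) (halt : ∀ v : V, B v v = 0)
    {x p : Submodule F V} (hx : IsIsoPoint B x) (hp : finrank F p = 1)
    (hple : p ≤ HexW 𝓛 x) (hne : p ≠ x) : HexAdj B 𝓛 x p := by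
  classical
  set W := HexW 𝓛 x with hW
  have hW3 : finrank F W = 3 := hhex.w_plane x hx
  have hxW : x ≤ W := point_le_hexW hhex hx
  have cardT := card_rank2_between x W hW3 hx.1 hxW
  have hfin : Finite {T : Submodule F V // finrank F T = 2 ∧ x ≤ T ∧ T ≤ W} := by
    apply Nat.finite_of_card_ne_zero
    rw [cardT]; omega
  let ι : {L : Submodule F V // L ∈ 𝓛 ∧ x ≤ L} →
      {T : Submodule F V // finrank F T = 2 ∧ x ≤ T ∧ T ≤ W} := fun L =>
    ⟨L.1, hhex.lines_rank L.1 L.2.1, L.2.2, line_le_hexW L.2.1 L.2.2⟩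
  have hιinj : Function.Injective ι := by
    intro a b h
    have : (ι a).1 = (ι b).1 := congrArg Subtype.val h
    exact Subtype.ext this
  have hbij : Function.Bijective ι := by
    rw [Nat.bijective_iff_injective_and_card]
    exact ⟨hιinj, by rw [hhex.lines_per_point x hx, cardT]⟩
  -- the candidate plane
  have hdisj : x ⊓ p = ⊥ := disj_points hx.1 hp hne
  have hrank : finrank F (x ⊔ p : Submodule F V) = 2 := by
    have := Submodule.finrank_sup_add_finrank_inf_eq x p
    rw [hdisj, hx.1, hp] at this
    simp [finrank_bot] at this
    omega
  obtain ⟨⟨L, hL, hxL⟩, hLT⟩ := hbij.2 ⟨x ⊔ p, hrank, le_sup_left, sup_le hxW hple⟩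
  have hLval : L = x ⊔ p := congrArg Subtype.val hLT
  refine ⟨hx, ⟨hp, fun v _ => halt v⟩, Ne.symm hne, L, hL, hxL, ?_⟩
  rw [hLval]; exact le_sup_right

end HexLemmas

/-- Lemma A.2(iv): if a generalized hexagon with parameters `q, q` is
embedded in a symplectic space of type `Sp(6,q)` (all points of the space being hexagon
points, certain totally isotropic lines being hexagon lines, and `W₂(x) = x^⊥`), then `q`
is even. -/
theorem hexagon_in_symplectic_implies_q_even
    (B : LinearMap.BilinForm F V) (hnd : B.Nondegenerate)
    (hdim : finrank F V = 6) (halt : ∀ v : V, B v v = 0)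
    (𝓛 : Set (Submodule F V)) (hhex : IsHexagonEmbedding B 𝓛) :
    Even (Fintype.card F) := by
  classical
  have hskew : ∀ u v : V, B u v = - B v u := skew_of_alt B halt
  -- helper for distinguishing spans
  have spne : ∀ (w a b : V), B w a = 0 → B w b ≠ 0 →
      Submodule.span F {a} ≠ Submodule.span F {b} := by
    intro w a b ha hb h
    have hbmem : b ∈ Submodule.span F {a} := by
      rw [h]; exact Submodule.mem_span_singleton_self b
    obtain ⟨c, rfl⟩ := Submodule.mem_span_singleton.mp hbmem
    rw [map_smul, ha] at hb
    simp at hb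
  -- opposite points e, f
  obtain ⟨e, f, he, hf, hef⟩ := hhex.opp_exists
  have hnp : ¬ ∀ u ∈ e, ∀ v ∈ f, B u v = 0 := fun h => hef ((hhex.perp_iff e f he hf).mpr h)
  push_neg at hnp
  obtain ⟨ev, hev, fv', hfv', hBef'⟩ := hnp
  have hev0 : ev ≠ 0 := by rintro rfl; simp at hBef'
  set fv : V := (B ev fv')⁻¹ • fv' with hfvdef
  have hfvf : fv ∈ f := Submodule.smul_mem _ _ hfv'
  have hBef : B ev fv = 1 := by
    rw [hfvdef, map_smul, smul_eq_mul]; field_simp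
  have hfv0 : fv ≠ 0 := by rintro h; rw [h] at hBef; simp at hBef
  have hBfe : B fv ev = -1 := by rw [hskew, hBef]
  have hespan : e = Submodule.span F {ev} := (span_eq_of_mem' he.1 hev hev0).symm
  have hfspan : f = Submodule.span F {fv} := (span_eq_of_mem' hf.1 hfvf hfv0).symm
  subst hespan
  subst hfspan
  -- perps
  set kerE := LinearMap.ker (B ev) with hkerEdef
  set kerF := LinearMap.ker (B fv) with hkerFdef
  have memkerE : ∀ v : V, v ∈ kerE ↔ B ev v = 0 := fun v => LinearMap.mem_ker
  have memkerF : ∀ v : V, v ∈ kerF ↔ B fv v = 0 := fun v => LinearMap.mem_ker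
  set We := HexW 𝓛 (Submodule.span F {ev}) with hWedef
  set Wf := HexW 𝓛 (Submodule.span F {fv}) with hWfdef
  have hWe3 : finrank F We = 3 := hhex.w_plane _ he
  have hWf3 : finrank F Wf = 3 := hhex.w_plane _ hf
  have hWeti := hexW_isotropic hhex halt he
  have hWfti := hexW_isotropic hhex halt hf
  have heWe : Submodule.span F {ev} ≤ We := point_le_hexW hhex he
  have hfWf : Submodule.span F {fv} ≤ Wf := point_le_hexW hhex hf
  have hevWe : ev ∈ We := heWe (Submodule.mem_span_singleton_self ev)
  have hfvWf : fv ∈ Wf := hfWf (Submodule.mem_span_singleton_self fv)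
  set L1 : Submodule F V := We ⊓ kerF with hL1def
  set L2 : Submodule F V := Wf ⊓ kerE with hL2def
  have hL1We : L1 ≤ We := inf_le_left
  have hL2Wf : L2 ≤ Wf := inf_le_left
  have hL1kerF : ∀ v ∈ L1, B fv v = 0 := fun v hv =>
    (memkerF v).mp (Submodule.mem_inf.mp hv).2
  have hL2kerE : ∀ v ∈ L2, B ev v = 0 := fun v hv =>
    (memkerE v).mp (Submodule.mem_inf.mp hv).2
  have hL1kerE : ∀ v ∈ L1, B ev v = 0 := fun v hv => hWeti ev hevWe v (hL1We hv)
  have hL2kerF : ∀ v ∈ L2, B fv v = 0 := fun v hv => hWfti fv hfvWf v (hL2Wf hv)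
  have hL1ti : ∀ u ∈ L1, ∀ w ∈ L1, B u w = 0 := fun u hu w hw =>
    hWeti u (hL1We hu) w (hL1We hw)
  have hL2ti : ∀ u ∈ L2, ∀ w ∈ L2, B u w = 0 := fun u hu w hw =>
    hWfti u (hL2Wf hu) w (hL2Wf hw)
  have hL1rank : finrank F L1 = 2 := by
    have h := finrank_inf_ker_eq We (B fv) hevWe (by rw [hBfe]; norm_num)
    rw [← hkerFdef, ← hL1def, hWe3] at h; omega
  have hL2rank : finrank F L2 = 2 := by
    have h := finrank_inf_ker_eq Wf (B ev) hfvWf (by rw [hBef]; norm_num)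
    rw [← hkerEdef, ← hL2def, hWf3] at h; omega
  -- L1 and L2 are disjoint
  have hL1L2 : L1 ⊓ L2 = ⊥ := by
    rw [eq_bot_iff]
    intro v hv
    rcases eq_or_ne v 0 with rfl | hv0
    · simp
    exfalso
    obtain ⟨hvL1, hvL2⟩ := Submodule.mem_inf.mp hv
    have hpe : Submodule.span F {v} ≠ Submodule.span F {ev} :=
      spne fv v ev (hL1kerF v hvL1) (by rw [hBfe]; norm_num)
    have hpf : Submodule.span F {v} ≠ Submodule.span F {fv} :=
      spne ev v fv (hL1kerE v hvL1) (by rw [hBef]; norm_num)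
    have hadj1 : HexAdj B 𝓛 (Submodule.span F {ev}) (Submodule.span F {v}) :=
      covering hhex halt he (finrank_span_singleton hv0)
        (by rw [Submodule.span_singleton_le_iff_mem]; exact hL1We hvL1) hpe
    have hadj2 : HexAdj B 𝓛 (Submodule.span F {fv}) (Submodule.span F {v}) :=
      covering hhex halt hf (finrank_span_singleton hv0)
        (by rw [Submodule.span_singleton_le_iff_mem]; exact hL2Wf hvL2) hpf
    exact hef (dle2_of_path hadj1 (adj_symm hadj2))
  have hU0rank : finrank F (L1 ⊔ L2 : Submodule F V) = 4 := by
    have h := Submodule.finrank_sup_add_finrank_inf_eq L1 L2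
    rw [hL1L2, hL1rank, hL2rank] at h
    simp only [finrank_bot] at h
    omega
  have hkerE5 : finrank F kerE = 5 := by
    have h := finrank_inf_ker_eq (⊤ : Submodule F V) (B ev)
      (Submodule.mem_top (x := fv)) (by rw [hBef]; norm_num)
    rw [top_inf_eq, ← hkerEdef, finrank_top, hdim] at h
    omega
  have hUker : finrank F (kerE ⊓ kerF : Submodule F V) = 4 := by
    have h := finrank_inf_ker_eq kerE (B fv) (w := ev)
      ((memkerE ev).mpr (halt ev)) (by rw [hBfe]; norm_num)
    rw [← hkerFdef, hkerE5] at h; omega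
  have hU0 : L1 ⊔ L2 = kerE ⊓ kerF := by
    apply Submodule.eq_of_le_of_finrank_le
    · apply sup_le
      · intro v hv
        exact Submodule.mem_inf.mpr
          ⟨(memkerE v).mpr (hL1kerE v hv), (Submodule.mem_inf.mp hv).2⟩
      · intro v hv
        exact Submodule.mem_inf.mpr
          ⟨(Submodule.mem_inf.mp hv).2, (memkerF v).mpr (hL2kerF v hv)⟩
    · rw [hU0rank, hUker]

  -- the special point x spanned by ev + fv
  have hBevx : B ev (ev + fv) = 1 := by rw [map_add, halt ev, hBef]; ring
  have hBfvx : B fv (ev + fv) = -1 := by rw [map_add, hBfe, halt fv]; ring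
  have hBxev : B (ev + fv) ev = -1 := by rw [hskew, hBevx]
  have hBxfv : B (ev + fv) fv = 1 := by rw [hskew, hBfvx]; ring
  have hxv0 : ev + fv ≠ 0 := by intro h; rw [h] at hBevx; simp at hBevx
  have hxiso : IsIsoPoint B (Submodule.span F {ev + fv}) := mkIso halt hxv0
  set Wx := HexW 𝓛 (Submodule.span F {ev + fv}) with hWxdef
  have hWx3 : finrank F Wx = 3 := hhex.w_plane _ hxiso
  have hWxti := hexW_isotropic hhex halt hxiso
  have hxWx : Submodule.span F {ev + fv} ≤ Wx := point_le_hexW hhex hxiso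
  have hxvWx : ev + fv ∈ Wx := hxWx (Submodule.mem_span_singleton_self _)
  have hndle_xe : ¬ HexDle2 B 𝓛 (Submodule.span F {ev + fv}) (Submodule.span F {ev}) :=
    not_dle2_of_nonperp hhex hxiso he (Submodule.mem_span_singleton_self _)
      (Submodule.mem_span_singleton_self _) (by rw [hBxev]; norm_num)
  have hndle_xf : ¬ HexDle2 B 𝓛 (Submodule.span F {ev + fv}) (Submodule.span F {fv}) :=
    not_dle2_of_nonperp hhex hxiso hf (Submodule.mem_span_singleton_self _)
      (Submodule.mem_span_singleton_self _) (by rw [hBxfv]; norm_num)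
  set T : Submodule F V := Wx ⊓ kerE with hTdef
  have hTrank : 2 ≤ finrank F T := by
    have h := finrank_inf_ker_ge Wx (B ev)
    rw [← hkerEdef, ← hTdef, hWx3] at h; omega
  have hTWx : T ≤ Wx := inf_le_left
  have hTkerE : ∀ v ∈ T, B ev v = 0 := fun v hv =>
    (memkerE v).mp (Submodule.mem_inf.mp hv).2
  have hTkerF : ∀ v ∈ T, B fv v = 0 := by
    intro v hv
    have h1 : B v (ev + fv) = 0 := hWxti v (hTWx hv) _ hxvWx
    have h2 : B v ev = 0 := by rw [hskew, hTkerE v hv]; ring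
    rw [map_add] at h1
    have h4 : B v fv = 0 := by linear_combination h1 - h2
    rw [hskew, h4]; ring
  have hTU0 : T ≤ L1 ⊔ L2 := by
    rw [hU0]
    intro v hv
    exact Submodule.mem_inf.mpr
      ⟨(Submodule.mem_inf.mp hv).2, (memkerF v).mpr (hTkerF v hv)⟩
  -- pick two independent vectors in T
  have hTne : T ≠ ⊥ := by
    intro h; rw [h, finrank_bot] at hTrank; omega
  obtain ⟨v1, hv1T, hv10⟩ := (Submodule.ne_bot_iff T).mp hTne
  have hnotle : ¬ T ≤ Submodule.span F {v1} := by
    intro hle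
    have h := Submodule.finrank_mono hle
    rw [finrank_span_singleton hv10] at h; omega
  obtain ⟨v2, hv2T, hv2ns⟩ := SetLike.not_le_iff_exists.mp hnotle
  have hv20 : v2 ≠ 0 := fun h => hv2ns (h ▸ Submodule.zero_mem _)
  set v3 : V := v1 + v2 with hv3def
  have hv3T : v3 ∈ T := T.add_mem hv1T hv2T
  have hv30 : v3 ≠ 0 := by
    intro h
    apply hv2ns
    have h2 : v2 = -v1 := by
      rw [eq_neg_iff_add_eq_zero, add_comm]; exact h
    rw [h2]
    exact Submodule.neg_mem _ (Submodule.mem_span_singleton_self v1)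
  have hy12 : Submodule.span F {v1} ≠ Submodule.span F {v2} := by
    intro h
    apply hv2ns
    rw [h]; exact Submodule.mem_span_singleton_self v2
  -- points of T are not x, e, f and are adjacent to x
  have hyx : ∀ v ∈ T, Submodule.span F {v} ≠ Submodule.span F {ev + fv} := by
    intro v hv
    exact spne ev v (ev + fv) (hTkerE v hv) (by rw [hBevx]; norm_num)
  have hadjx : ∀ v ∈ T, v ≠ 0 →
      HexAdj B 𝓛 (Submodule.span F {ev + fv}) (Submodule.span F {v}) := by
    intro v hvT hv0
    refine covering hhex halt hxiso (finrank_span_singleton hv0) ?_ (hyx v hvT)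
    rw [Submodule.span_singleton_le_iff_mem]
    exact hTWx hvT

  -- decompositions of We and Wf
  have hWedec : Submodule.span F {ev} ⊔ L1 = We := by
    apply Submodule.eq_of_le_of_finrank_le (sup_le heWe hL1We)
    have hd : Submodule.span F {ev} ⊓ L1 = ⊥ := by
      rw [eq_bot_iff]
      intro u hu
      obtain ⟨hu1, hu2⟩ := Submodule.mem_inf.mp hu
      obtain ⟨c, rfl⟩ := Submodule.mem_span_singleton.mp hu1
      have h := hL1kerF _ hu2
      rw [map_smul, hBfe] at h
      have hc : c = 0 := by simpa using h
      simp [hc]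
    have h := Submodule.finrank_sup_add_finrank_inf_eq (Submodule.span F {ev}) L1
    rw [hd, finrank_span_singleton hev0, hL1rank, finrank_bot] at h
    rw [hWe3]
    omega
  have hWfdec : Submodule.span F {fv} ⊔ L2 = Wf := by
    apply Submodule.eq_of_le_of_finrank_le (sup_le hfWf hL2Wf)
    have hd : Submodule.span F {fv} ⊓ L2 = ⊥ := by
      rw [eq_bot_iff]
      intro u hu
      obtain ⟨hu1, hu2⟩ := Submodule.mem_inf.mp hu
      obtain ⟨c, rfl⟩ := Submodule.mem_span_singleton.mp hu1
      have h := hL2kerE _ hu2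
      rw [map_smul, hBef] at h
      have hc : c = 0 := by simpa using h
      simp [hc]
    have h := Submodule.finrank_sup_add_finrank_inf_eq (Submodule.span F {fv}) L2
    rw [hd, finrank_span_singleton hfv0, hL2rank, finrank_bot] at h
    rw [hWf3]
    omega
  -- the midpoint towards e of any point of T lies on L1
  have getz : ∀ v, v ∈ T → v ≠ 0 → ∃ zv : V, zv ≠ 0 ∧ zv ∈ L1 ∧
      HexAdj B 𝓛 (Submodule.span F {zv}) (Submodule.span F {v}) ∧
      HexAdj B 𝓛 (Submodule.span F {zv}) (Submodule.span F {ev}) := by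
    intro v hvT hv0
    have hyiso : IsIsoPoint B (Submodule.span F {v}) := mkIso halt hv0
    have hBvev : B v ev = 0 := by rw [hskew, hTkerE v hvT]; ring
    have hye : HexDle2 B 𝓛 (Submodule.span F {v}) (Submodule.span F {ev}) :=
      (hhex.perp_iff _ _ hyiso he).mpr (perp_pts hBvev)
    have hyne : Submodule.span F {v} ≠ Submodule.span F {ev} :=
      spne fv v ev (hTkerF v hvT) (by rw [hBfe]; norm_num)
    have hnadj : ¬ HexAdj B 𝓛 (Submodule.span F {v}) (Submodule.span F {ev}) :=
      fun hadj => hndle_xe (dle2_of_path (hadjx v hvT hv0) hadj)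
    obtain ⟨z, ⟨hz1, hz2⟩, -⟩ := hhex.unique_mid _ _ hyiso he hyne hnadj hye
    have hziso : IsIsoPoint B z := hz1.2.1
    obtain ⟨zv, hzv0, hzspan⟩ := exists_gen hziso.1
    rw [hzspan] at hz1 hz2
    have hzWe : zv ∈ We := by
      obtain ⟨-, -, -, L, hL, hzL, heL⟩ := hz2
      exact line_le_hexW hL heL (hzL (Submodule.mem_span_singleton_self zv))
    have hdxz : HexDle2 B 𝓛 (Submodule.span F {ev + fv}) (Submodule.span F {zv}) :=
      dle2_of_path (hadjx v hvT hv0) hz1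
    have hperp : B (ev + fv) zv = 0 :=
      perp_of_dle2 hhex hxiso (mkIso halt hzv0) hdxz _
        (Submodule.mem_span_singleton_self _) _ (Submodule.mem_span_singleton_self _)
    have hzmem : zv ∈ Submodule.span F {ev} ⊔ L1 := by rw [hWedec]; exact hzWe
    obtain ⟨a, ha, b, hb, hab⟩ := Submodule.mem_sup.mp hzmem
    obtain ⟨c, rfl⟩ := Submodule.mem_span_singleton.mp ha
    have hBb : B (ev + fv) b = 0 := by
      have h1 : B ev b = 0 := hL1kerE b hb
      have h2 : B fv b = 0 := hL1kerF b hb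
      simp [map_add, h1, h2]
    have hc : c = 0 := by
      have h1 : B (ev + fv) (c • ev + b) = 0 := by rw [hab]; exact hperp
      rw [map_add, map_smul, hBxev, hBb] at h1
      simpa using h1
    rw [hc, zero_smul, zero_add] at hab
    exact ⟨zv, hzv0, hab ▸ hb, adj_symm hz1, hz2⟩
  -- the midpoint towards f of any point of T lies on L2
  have getz' : ∀ v, v ∈ T → v ≠ 0 → ∃ zv : V, zv ≠ 0 ∧ zv ∈ L2 ∧
      HexAdj B 𝓛 (Submodule.span F {zv}) (Submodule.span F {v}) ∧
      HexAdj B 𝓛 (Submodule.span F {zv}) (Submodule.span F {fv}) := by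
    intro v hvT hv0
    have hyiso : IsIsoPoint B (Submodule.span F {v}) := mkIso halt hv0
    have hBvfv : B v fv = 0 := by rw [hskew, hTkerF v hvT]; ring
    have hye : HexDle2 B 𝓛 (Submodule.span F {v}) (Submodule.span F {fv}) :=
      (hhex.perp_iff _ _ hyiso hf).mpr (perp_pts hBvfv)
    have hyne : Submodule.span F {v} ≠ Submodule.span F {fv} :=
      spne ev v fv (hTkerE v hvT) (by rw [hBef]; norm_num)
    have hnadj : ¬ HexAdj B 𝓛 (Submodule.span F {v}) (Submodule.span F {fv}) :=
      fun hadj => hndle_xf (dle2_of_path (hadjx v hvT hv0) hadj)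
    obtain ⟨z, ⟨hz1, hz2⟩, -⟩ := hhex.unique_mid _ _ hyiso hf hyne hnadj hye
    have hziso : IsIsoPoint B z := hz1.2.1
    obtain ⟨zv, hzv0, hzspan⟩ := exists_gen hziso.1
    rw [hzspan] at hz1 hz2
    have hzWf : zv ∈ Wf := by
      obtain ⟨-, -, -, L, hL, hzL, hfL⟩ := hz2
      exact line_le_hexW hL hfL (hzL (Submodule.mem_span_singleton_self zv))
    have hdxz : HexDle2 B 𝓛 (Submodule.span F {ev + fv}) (Submodule.span F {zv}) :=
      dle2_of_path (hadjx v hvT hv0) hz1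
    have hperp : B (ev + fv) zv = 0 :=
      perp_of_dle2 hhex hxiso (mkIso halt hzv0) hdxz _
        (Submodule.mem_span_singleton_self _) _ (Submodule.mem_span_singleton_self _)
    have hzmem : zv ∈ Submodule.span F {fv} ⊔ L2 := by rw [hWfdec]; exact hzWf
    obtain ⟨a, ha, b, hb, hab⟩ := Submodule.mem_sup.mp hzmem
    obtain ⟨c, rfl⟩ := Submodule.mem_span_singleton.mp ha
    have hBb : B (ev + fv) b = 0 := by
      have h1 : B ev b = 0 := hL2kerE b hb
      have h2 : B fv b = 0 := hL2kerF b hb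
      simp [map_add, h1, h2]
    have hc : c = 0 := by
      have h1 : B (ev + fv) (c • fv + b) = 0 := by rw [hab]; exact hperp
      rw [map_add, map_smul, hBxfv, hBb] at h1
      simpa using h1
    rw [hc, zero_smul, zero_add] at hab
    exact ⟨zv, hzv0, hab ▸ hb, adj_symm hz1, hz2⟩
  obtain ⟨z1, hz10, hz1L1, hz1v, hz1e⟩ := getz v1 hv1T hv10
  obtain ⟨z2, hz20, hz2L1, hz2v, hz2e⟩ := getz v2 hv2T hv20
  obtain ⟨z3, hz30, hz3L1, hz3v, hz3e⟩ := getz v3 hv3T hv30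
  obtain ⟨w1, hw10, hw1L2, hw1v, hw1f⟩ := getz' v1 hv1T hv10
  obtain ⟨w2, hw20, hw2L2, hw2v, hw2f⟩ := getz' v2 hv2T hv20
  obtain ⟨w3, hw30, hw3L2, hw3v, hw3f⟩ := getz' v3 hv3T hv30
  -- distinctness of the two midpoints (uses uniqueness of midpoints)
  have hw12ne : Submodule.span F {w1} ≠ Submodule.span F {w2} := by
    intro h
    have hxwne : Submodule.span F {ev + fv} ≠ Submodule.span F {w1} :=
      (spne ev w1 (ev + fv) (hL2kerE w1 hw1L2) (by rw [hBevx]; norm_num)).symm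
    have hnadj : ¬ HexAdj B 𝓛 (Submodule.span F {ev + fv}) (Submodule.span F {w1}) :=
      fun hadj => hndle_xf (dle2_of_path hadj hw1f)
    have hdle : HexDle2 B 𝓛 (Submodule.span F {ev + fv}) (Submodule.span F {w1}) :=
      dle2_of_path (hadjx v1 hv1T hv10) (adj_symm hw1v)
    obtain ⟨w, -, huniq⟩ := hhex.unique_mid _ _ hxiso (mkIso halt hw10) hxwne hnadj hdle
    have hw2v' : HexAdj B 𝓛 (Submodule.span F {w1}) (Submodule.span F {v2}) := by
      rw [h]; exact hw2v
    have e1 : Submodule.span F {v1} = w := huniq _ ⟨hadjx v1 hv1T hv10, adj_symm hw1v⟩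
    have e2 : Submodule.span F {v2} = w := huniq _ ⟨hadjx v2 hv2T hv20, adj_symm hw2v'⟩
    exact hy12 (e1.trans e2.symm)

  -- decompose the chosen points of T over L1 and L2
  have decompT : ∀ v ∈ T, ∃ a b : V, a ∈ L1 ∧ b ∈ L2 ∧ v = a + b := by
    intro v hv
    obtain ⟨a, ha, b, hb, hab⟩ := Submodule.mem_sup.mp (hTU0 hv)
    exact ⟨a, b, ha, hb, hab.symm⟩
  obtain ⟨a1, b1, ha1, hb1, hd1⟩ := decompT v1 hv1T
  obtain ⟨a2, b2, ha2, hb2, hd2⟩ := decompT v2 hv2T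
  have hd3 : v3 = (a1 + a2) + (b1 + b2) := by rw [hv3def, hd1, hd2]; abel
  -- components are nonzero
  have hanz : ∀ v a b : V, v ∈ T → v ≠ 0 → a ∈ L1 → b ∈ L2 → v = a + b → a ≠ 0 := by
    intro v a b hvT hv0 ha hb hd ha0
    rw [ha0, zero_add] at hd
    have hvL2 : v ∈ L2 := hd ▸ hb
    have hne : Submodule.span F {v} ≠ Submodule.span F {fv} :=
      spne ev v fv (hTkerE v hvT) (by rw [hBef]; norm_num)
    have hadj : HexAdj B 𝓛 (Submodule.span F {fv}) (Submodule.span F {v}) :=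
      covering hhex halt hf (finrank_span_singleton hv0)
        (by rw [Submodule.span_singleton_le_iff_mem]; exact hL2Wf hvL2) hne
    exact hndle_xf (dle2_of_path (hadjx v hvT hv0) (adj_symm hadj))
  have hbnz : ∀ v a b : V, v ∈ T → v ≠ 0 → a ∈ L1 → b ∈ L2 → v = a + b → b ≠ 0 := by
    intro v a b hvT hv0 ha hb hd hb0
    rw [hb0, add_zero] at hd
    have hvL1 : v ∈ L1 := hd ▸ ha
    have hne : Submodule.span F {v} ≠ Submodule.span F {ev} :=
      spne fv v ev (hTkerF v hvT) (by rw [hBfe]; norm_num)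
    have hadj : HexAdj B 𝓛 (Submodule.span F {ev}) (Submodule.span F {v}) :=
      covering hhex halt he (finrank_span_singleton hv0)
        (by rw [Submodule.span_singleton_le_iff_mem]; exact hL1We hvL1) hne
    exact hndle_xe (dle2_of_path (hadjx v hvT hv0) (adj_symm hadj))
  have ha10 : a1 ≠ 0 := hanz v1 a1 b1 hv1T hv10 ha1 hb1 hd1
  have hb10 : b1 ≠ 0 := hbnz v1 a1 b1 hv1T hv10 ha1 hb1 hd1
  have ha20 : a2 ≠ 0 := hanz v2 a2 b2 hv2T hv20 ha2 hb2 hd2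
  have hb20 : b2 ≠ 0 := hbnz v2 a2 b2 hv2T hv20 ha2 hb2 hd2
  have ha3 : a1 + a2 ∈ L1 := L1.add_mem ha1 ha2
  have hb3 : b1 + b2 ∈ L2 := L2.add_mem hb1 hb2
  have ha30 : a1 + a2 ≠ 0 := hanz v3 _ _ hv3T hv30 ha3 hb3 hd3
  have hb30 : b1 + b2 ≠ 0 := hbnz v3 _ _ hv3T hv30 ha3 hb3 hd3
  -- the whole space is spanned by ev, fv, L1, L2
  have hVtop : (Submodule.span F {ev} ⊔ Submodule.span F {fv}) ⊔ (L1 ⊔ L2) = ⊤ := by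
    apply Submodule.eq_top_of_finrank_eq
    have hSd : Submodule.span F {ev} ⊓ Submodule.span F {fv} = ⊥ :=
      disj_points (finrank_span_singleton hev0) (finrank_span_singleton hfv0)
        (spne fv fv ev (halt fv) (by rw [hBfe]; norm_num))
    have hS2 : finrank F (Submodule.span F {ev} ⊔ Submodule.span F {fv} : Submodule F V) = 2 := by
      have h := Submodule.finrank_sup_add_finrank_inf_eq
        (Submodule.span F {ev}) (Submodule.span F {fv})
      rw [hSd, finrank_span_singleton hev0, finrank_span_singleton hfv0, finrank_bot] at h
      omega
    have hSU : (Submodule.span F {ev} ⊔ Submodule.span F {fv}) ⊓ (L1 ⊔ L2) = ⊥ := by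
      rw [hU0, eq_bot_iff]
      intro u hu
      obtain ⟨hu1, hu2⟩ := Submodule.mem_inf.mp hu
      obtain ⟨s, hs, t, ht, hst⟩ := Submodule.mem_sup.mp hu1
      obtain ⟨α, rfl⟩ := Submodule.mem_span_singleton.mp hs
      obtain ⟨β, rfl⟩ := Submodule.mem_span_singleton.mp ht
      obtain ⟨huE, huF⟩ := Submodule.mem_inf.mp hu2
      have hE : B ev u = 0 := (memkerE u).mp huE
      have hF : B fv u = 0 := (memkerF u).mp huF
      rw [← hst] at hE hF
      simp only [map_add, map_smul, smul_eq_mul, halt, hBef, hBfe] at hE hF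
      have hβ : β = 0 := by simpa using hE
      have hα : α = 0 := by simpa using hF
      rw [← hst, hα, hβ]
      simp
    have h := Submodule.finrank_sup_add_finrank_inf_eq
      (Submodule.span F {ev} ⊔ Submodule.span F {fv}) (L1 ⊔ L2)
    rw [hSU, hS2, hU0rank, finrank_bot] at h
    rw [hdim]
    omega
  -- nondegeneracy of the pairing between L1 and L2
  have pairL2 : ∀ w ∈ L2, w ≠ 0 → ∃ u ∈ L1, B u w ≠ 0 := by
    intro w hw hw0
    by_contra hcon
    push_neg at hcon
    apply hw0
    apply hnd.1 w
    intro n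
    have hn : n ∈ (Submodule.span F {ev} ⊔ Submodule.span F {fv}) ⊔ (L1 ⊔ L2) := by
      rw [hVtop]; trivial
    obtain ⟨s, hs, t, ht, hst⟩ := Submodule.mem_sup.mp hn
    obtain ⟨s1, hs1, s2, hs2, hss⟩ := Submodule.mem_sup.mp hs
    obtain ⟨t1, ht1, t2, ht2, htt⟩ := Submodule.mem_sup.mp ht
    obtain ⟨α, rfl⟩ := Submodule.mem_span_singleton.mp hs1
    obtain ⟨β, rfl⟩ := Submodule.mem_span_singleton.mp hs2
    have hBn : B n w = 0 := by
      rw [← hst, ← hss, ← htt]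
      simp only [map_add, map_smul, LinearMap.add_apply, LinearMap.smul_apply, smul_eq_mul]
      rw [hL2kerE w hw, hL2kerF w hw, hcon t1 ht1, hL2ti t2 ht2 w hw]
      ring
    rw [hskew, hBn, neg_zero]
  have pairL1 : ∀ v ∈ L1, v ≠ 0 → ∃ u ∈ L2, B v u ≠ 0 := by
    intro v hv hv0
    by_contra hcon
    push_neg at hcon
    apply hv0
    apply hnd.1 v
    intro n
    have hn : n ∈ (Submodule.span F {ev} ⊔ Submodule.span F {fv}) ⊔ (L1 ⊔ L2) := by
      rw [hVtop]; trivial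
    obtain ⟨s, hs, t, ht, hst⟩ := Submodule.mem_sup.mp hn
    obtain ⟨s1, hs1, s2, hs2, hss⟩ := Submodule.mem_sup.mp hs
    obtain ⟨t1, ht1, t2, ht2, htt⟩ := Submodule.mem_sup.mp ht
    obtain ⟨α, rfl⟩ := Submodule.mem_span_singleton.mp hs1
    obtain ⟨β, rfl⟩ := Submodule.mem_span_singleton.mp hs2
    rw [← hst, ← hss, ← htt]
    simp only [map_add, map_smul, smul_eq_mul]
    have h1 : B v ev = 0 := by rw [hskew, hL1kerE v hv]; ring
    have h2 : B v fv = 0 := by rw [hskew, hL1kerF v hv]; ring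
    rw [h1, h2, hL1ti v hv t1 ht1, hcon t2 ht2]
    ring
  -- uniqueness of perpendicular points on L1 / L2
  have uniqL1 : ∀ w, w ∈ L2 → w ≠ 0 → ∀ u u' : V, u ∈ L1 → u ≠ 0 → u' ∈ L1 → u' ≠ 0 →
      B u w = 0 → B u' w = 0 → Submodule.span F {u} = Submodule.span F {u'} := by
    intro w hw hw0 u u' hu hu0 hu' hu'0 hB hB'
    obtain ⟨u0, hu0L1, hu0B⟩ := pairL2 w hw hw0
    have hK : finrank F (L1 ⊓ LinearMap.ker (B.flip w) : Submodule F V) = 1 := by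
      have h := finrank_inf_ker_eq L1 (B.flip w) hu0L1 (by simpa using hu0B)
      rw [hL1rank] at h; omega
    have hm1 : u ∈ L1 ⊓ LinearMap.ker (B.flip w) :=
      Submodule.mem_inf.mpr ⟨hu, LinearMap.mem_ker.mpr (by simpa using hB)⟩
    have hm2 : u' ∈ L1 ⊓ LinearMap.ker (B.flip w) :=
      Submodule.mem_inf.mpr ⟨hu', LinearMap.mem_ker.mpr (by simpa using hB')⟩
    rw [span_eq_of_mem' hK hm1 hu0, span_eq_of_mem' hK hm2 hu'0]
  have uniqL2 : ∀ v, v ∈ L1 → v ≠ 0 → ∀ w w' : V, w ∈ L2 → w ≠ 0 → w' ∈ L2 → w' ≠ 0 →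
      B v w = 0 → B v w' = 0 → Submodule.span F {w} = Submodule.span F {w'} := by
    intro v hv hv0 w w' hw hw0' hw' hw'0 hB hB'
    obtain ⟨w0, hw0L2, hw0B⟩ := pairL1 v hv hv0
    have hK : finrank F (L2 ⊓ LinearMap.ker (B v) : Submodule F V) = 1 := by
      have h := finrank_inf_ker_eq L2 (B v) hw0L2 hw0B
      rw [hL2rank] at h; omega
    have hm1 : w ∈ L2 ⊓ LinearMap.ker (B v) :=
      Submodule.mem_inf.mpr ⟨hw, LinearMap.mem_ker.mpr hB⟩
    have hm2 : w' ∈ L2 ⊓ LinearMap.ker (B v) :=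
      Submodule.mem_inf.mpr ⟨hw', LinearMap.mem_ker.mpr hB'⟩
    rw [span_eq_of_mem' hK hm1 hw0', span_eq_of_mem' hK hm2 hw'0]
  -- identification of the components with the midpoints
  have identA : ∀ v a b za zb : V, a ∈ L1 → a ≠ 0 → b ∈ L2 → b ≠ 0 → v = a + b →
      za ≠ 0 → za ∈ L1 → HexAdj B 𝓛 (Submodule.span F {za}) (Submodule.span F {v}) →
      zb ≠ 0 → zb ∈ L2 → HexAdj B 𝓛 (Submodule.span F {zb}) (Submodule.span F {v}) →
      Submodule.span F {b} = Submodule.span F {zb} ∧ B a b = 0 := by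
    intro v a b za zb ha ha0 hb hb0 hd hza0 hzaL1 hzav hzb0 hzbL2 hzbv
    have F1 : B za v = 0 := adj_perp_vec hhex hzav
    have F2 : B zb v = 0 := adj_perp_vec hhex hzbv
    have F3 : B za zb = 0 := by
      have hdle : HexDle2 B 𝓛 (Submodule.span F {za}) (Submodule.span F {zb}) :=
        dle2_of_path hzav (adj_symm hzbv)
      exact perp_of_dle2 hhex (mkIso halt hza0) (mkIso halt hzb0) hdle _
        (Submodule.mem_span_singleton_self _) _ (Submodule.mem_span_singleton_self _)
    have hzab : B za b = 0 := by
      have h := F1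
      rw [hd, map_add, hL1ti za hzaL1 a ha] at h
      simpa using h
    have hazb : B a zb = 0 := by
      have h := F2
      rw [hd, map_add, hL2ti zb hzbL2 b hb] at h
      have h' : B zb a = 0 := by simpa using h
      rw [hskew, h', neg_zero]
    have hsa : Submodule.span F {a} = Submodule.span F {za} :=
      uniqL1 zb hzbL2 hzb0 a za ha ha0 hzaL1 hza0 hazb F3
    have hsb : Submodule.span F {b} = Submodule.span F {zb} :=
      uniqL2 za hzaL1 hza0 b zb hb hb0 hzbL2 hzb0 hzab F3
    refine ⟨hsb, ?_⟩
    have hamem : a ∈ Submodule.span F {za} := by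
      rw [← hsa]; exact Submodule.mem_span_singleton_self a
    obtain ⟨c, hca⟩ := Submodule.mem_span_singleton.mp hamem
    rw [← hca, map_smul, LinearMap.smul_apply, hzab, smul_zero]
  obtain ⟨hsb1, hab1⟩ :=
    identA v1 a1 b1 z1 w1 ha1 ha10 hb1 hb10 hd1 hz10 hz1L1 hz1v hw10 hw1L2 hw1v
  obtain ⟨hsb2, hab2⟩ :=
    identA v2 a2 b2 z2 w2 ha2 ha20 hb2 hb20 hd2 hz20 hz2L1 hz2v hw20 hw2L2 hw2v
  obtain ⟨-, hab3⟩ :=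
    identA v3 (a1 + a2) (b1 + b2) z3 w3 ha3 ha30 hb3 hb30 hd3 hz30 hz3L1 hz3v hw30 hw3L2 hw3v
  have hb12ne : Submodule.span F {b1} ≠ Submodule.span F {b2} := by
    rw [hsb1, hsb2]; exact hw12ne
  -- final algebra
  have hperp12 : B v1 v2 = 0 := hWxti v1 (hTWx hv1T) v2 (hTWx hv2T)
  have hm : B a1 b2 = B a2 b1 := by
    have h : B (a1 + b1) (a2 + b2) = 0 := by rw [← hd1, ← hd2]; exact hperp12
    simp only [map_add, LinearMap.add_apply] at h
    have e1 : B a1 a2 = 0 := hL1ti a1 ha1 a2 ha2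
    have e2 : B b1 b2 = 0 := hL2ti b1 hb1 b2 hb2
    have e3 : B b1 a2 = - B a2 b1 := hskew b1 a2
    linear_combination h - e1 - e2 - e3
  have h2m : B a1 b2 + B a2 b1 = 0 := by
    have h := hab3
    simp only [map_add, LinearMap.add_apply] at h
    linear_combination h - hab1 - hab2
  have hmne : B a1 b2 ≠ 0 := by
    intro h0
    exact hb12ne (uniqL2 a1 ha1 ha10 b1 b2 hb1 hb10 hb2 hb20 hab1 h0)
  have h2 : (2 : F) = 0 := by
    have h : (2 : F) * B a1 b2 = 0 := by
      rw [two_mul]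
      linear_combination h2m + hm
    rcases mul_eq_zero.mp h with h' | h'
    · exact h'
    · exact absurd h' hmne
  have hchar : ringChar F = 2 := by
    have hdvd : ringChar F ∣ 2 := by
      rw [← CharP.cast_eq_zero_iff F (ringChar F) 2]
      exact_mod_cast h2
    exact (Nat.prime_dvd_prime_iff_eq (CharP.char_is_prime F (ringChar F))
      Nat.prime_two).mp hdvd
  exact Nat.even_iff.mpr (FiniteField.even_card_of_char_two hchar)
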